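/- Let W be a subset of the set V of pure octonions of the real octonion algebra 𝕆 such that W ≠ {0}, W is closed under multiplication by real scalars, and φ(W) ⊆ W for every ℝ-algebra automorphism φ of 𝕆. Then W = V. -/

import Mathlib

noncomputable section

/-- The real octonions: the Cayley–Dickson double of the quaternions. -/
@[ext]
structure Octo : Type where
  a : Quaternion ℝ
  b : Quaternion ℝ

namespace Octo

instance : Zero Octo := ⟨⟨0, 0⟩⟩
instance : One Octo := ⟨⟨1, 0⟩⟩
instance : Add Octo := ⟨fun u v => ⟨u.a + v.a, u.b + v.b⟩⟩
instance : Neg Octo := ⟨fun u => ⟨-u.a, -u.b⟩⟩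
instance : SMul ℝ Octo := ⟨fun r u => ⟨r • u.a, r • u.b⟩⟩
instance : Mul Octo :=
  ⟨fun u v => ⟨u.a * v.a - star v.b * u.b, v.b * u.a + u.b * star v.a⟩⟩
instance : Star Octo := ⟨fun u => ⟨star u.a, -u.b⟩⟩

@[simp] lemma zero_a : (0 : Octo).a = 0 := rfl
@[simp] lemma zero_b : (0 : Octo).b = 0 := rfl
@[simp] lemma one_a : (1 : Octo).a = 1 := rfl
@[simp] lemma one_b : (1 : Octo).b = 0 := rfl
@[simp] lemma add_a (u v : Octo) : (u + v).a = u.a + v.a := rfl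
@[simp] lemma add_b (u v : Octo) : (u + v).b = u.b + v.b := rfl
@[simp] lemma neg_a (u : Octo) : (-u).a = -u.a := rfl
@[simp] lemma neg_b (u : Octo) : (-u).b = -u.b := rfl
@[simp] lemma smul_a (r : ℝ) (u : Octo) : (r • u).a = r • u.a := rfl
@[simp] lemma smul_b (r : ℝ) (u : Octo) : (r • u).b = r • u.b := rfl
@[simp] lemma mul_a (u v : Octo) : (u * v).a = u.a * v.a - star v.b * u.b := rfl
@[simp] lemma mul_b (u v : Octo) : (u * v).b = v.b * u.a + u.b * star v.a := rfl
@[simp] lemma star_a (u : Octo) : (star u).a = star u.a := rfl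
@[simp] lemma star_b (u : Octo) : (star u).b = -u.b := rfl

instance addCommGroup : AddCommGroup Octo where
  add_assoc u v w := by refine Octo.ext ?_ ?_ <;> simp only [add_a, add_b] <;> apply add_assoc
  zero_add u := by refine Octo.ext ?_ ?_ <;> simp only [add_a, add_b, zero_a, zero_b] <;> apply zero_add
  add_zero u := by refine Octo.ext ?_ ?_ <;> simp only [add_a, add_b, zero_a, zero_b] <;> apply add_zero
  nsmul := nsmulRec
  zsmul := zsmulRec
  neg_add_cancel u := by
    refine Octo.ext ?_ ?_ <;> simp only [add_a, add_b, neg_a, neg_b, zero_a, zero_b] <;> apply neg_add_cancel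
  add_comm u v := by refine Octo.ext ?_ ?_ <;> simp only [add_a, add_b] <;> apply add_comm

lemma left_distrib' (u v w : Octo) : u * (v + w) = u * v + u * w := by
  refine Octo.ext ?_ ?_ <;> simp only [mul_a, mul_b, add_a, add_b, star_add, mul_add, add_mul] <;> abel

lemma right_distrib' (u v w : Octo) : (u + v) * w = u * w + v * w := by
  refine Octo.ext ?_ ?_ <;> simp only [mul_a, mul_b, add_a, add_b, star_add, mul_add, add_mul] <;> abel

lemma zero_mul' (u : Octo) : 0 * u = 0 := by
  refine Octo.ext ?_ ?_ <;> simp only [mul_a, mul_b, zero_a, zero_b, mul_zero, zero_mul, sub_zero,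
    add_zero, zero_add, zero_sub, neg_zero]

lemma mul_zero' (u : Octo) : u * 0 = 0 := by
  refine Octo.ext ?_ ?_ <;> simp only [mul_a, mul_b, zero_a, zero_b, mul_zero, zero_mul, sub_zero,
    add_zero, zero_add, zero_sub, neg_zero, star_zero]

instance : NonUnitalNonAssocRing Octo :=
  { Octo.addCommGroup, (inferInstance : Mul Octo) with
    left_distrib := left_distrib'
    right_distrib := right_distrib'
    zero_mul := zero_mul'
    mul_zero := mul_zero' }

instance module : Module ℝ Octo where
  one_smul u := by refine Octo.ext ?_ ?_ <;> simp only [smul_a, smul_b] <;> apply one_smul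
  mul_smul r s u := by refine Octo.ext ?_ ?_ <;> simp only [smul_a, smul_b] <;> apply mul_smul
  smul_zero r := by refine Octo.ext ?_ ?_ <;> simp only [smul_a, smul_b, zero_a, zero_b] <;> apply smul_zero
  smul_add r u v := by refine Octo.ext ?_ ?_ <;> simp only [smul_a, smul_b, add_a, add_b] <;> apply smul_add
  add_smul r s u := by refine Octo.ext ?_ ?_ <;> simp only [smul_a, smul_b, add_a, add_b] <;> apply add_smul
  zero_smul u := by refine Octo.ext ?_ ?_ <;> simp only [smul_a, smul_b, zero_a, zero_b] <;> apply zero_smul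

instance : IsScalarTower ℝ Octo Octo :=
  ⟨fun r u v => by
    show (r • u) * v = r • (u * v)
    refine Octo.ext ?_ ?_ <;>
      simp only [mul_a, mul_b, smul_a, smul_b, smul_sub, smul_add, mul_smul_comm,
        smul_mul_assoc]⟩

instance : SMulCommClass ℝ Octo Octo :=
  ⟨fun r u v => by
    show r • (u * v) = u * (r • v)
    refine Octo.ext ?_ ?_ <;>
      simp only [mul_a, mul_b, smul_a, smul_b, smul_sub, smul_add, mul_smul_comm,
        smul_mul_assoc, Quaternion.star_smul]⟩

instance : StarRing Octo where
  star_involutive u := by refine Octo.ext ?_ ?_ <;> simp only [star_a, star_b, star_star, neg_neg]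
  star_mul u v := by
    refine Octo.ext ?_ ?_ <;>
      simp only [star_a, star_b, mul_a, mul_b, star_sub, star_add, star_mul, star_star, star_neg,
        mul_neg, neg_mul, neg_add_rev, neg_neg, neg_sub] <;> abel
  star_add u v := by refine Octo.ext ?_ ?_ <;> simp only [star_a, star_b, add_a, add_b, star_add, neg_add_rev] <;> abel

instance : StarModule ℝ Octo :=
  ⟨fun r u => by
    refine Octo.ext ?_ ?_ <;> simp only [star_a, star_b, smul_a, smul_b, Quaternion.star_smul,
      star_trivial, smul_neg]⟩

/-- The set of pure octonions (trace zero). -/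
def V : Set Octo := {x : Octo | x + star x = 0}

/-- The set of scalar octonions `ℝ·1`. -/
def scalars : Set Octo := Set.range fun r : ℝ => r • (1 : Octo)

/-- `φ` is an `ℝ`-algebra automorphism of the octonions. -/
def IsAut (φ : Octo ≃ₗ[ℝ] Octo) : Prop :=
  φ 1 = 1 ∧ ∀ x y : Octo, φ (x * y) = φ x * φ y

end Octo

/-- Number of occurrences of the variable `i` in a nonassociative word. -/
def FreeMagma.degCount {X : Type*} [DecidableEq X] : FreeMagma X → X → ℕ
  | .of x, i => if x = i then 1 else 0
  | .mul w₁ w₂, i => w₁.degCount i + w₂.degCount i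

/-- A nonassociative polynomial is multilinear if every variable occurs exactly once
in each of its monomials. -/
def IsMultilinear {R : Type*} [Semiring R] {n : ℕ}
    (p : FreeNonUnitalNonAssocAlgebra R (Fin n)) : Prop :=
  ∀ w ∈ p.coeff.support, ∀ i : Fin n, w.degCount i = 1

/-- Evaluation of a nonassociative polynomial on the octonions. -/
def Octo.eval {n : ℕ} (p : FreeNonUnitalNonAssocAlgebra ℝ (Fin n)) (v : Fin n → Octo) : Octo :=
  FreeNonUnitalNonAssocAlgebra.lift ℝ v p

/-!
The automorphism group of `𝕆` acts transitively on the rays of `V`. For unit quaternions `q, r`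
the map `(a, b) ↦ (q a q*, r b q*)` is an automorphism, and these bring any pure octonion to the
form `(s i, t)`. The automorphism exchanging `j` and `ℓ = (0, 1)` turns `(s i, t)` into the pure
quaternion `(s i + t j, 0)`, which one more conjugation moves onto the ray `ℝ i`. So a cone `W`
containing a nonzero vector contains `i`, hence every pure octonion.
-/

open Quaternion

namespace Quaternion

/-- The quaternion `w + x i + y j + z k`, typed as `ℍ[ℝ]` rather than as a `QuaternionAlgebra`
literal so that the `Quaternion` simp lemmas apply to it. -/
def quat (w x y z : ℝ) : ℍ[ℝ] := ⟨w, x, y, z⟩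

@[simp] lemma quat_re (w x y z : ℝ) : (quat w x y z).re = w := rfl
@[simp] lemma quat_imI (w x y z : ℝ) : (quat w x y z).imI = x := rfl
@[simp] lemma quat_imJ (w x y z : ℝ) : (quat w x y z).imJ = y := rfl
@[simp] lemma quat_imK (w x y z : ℝ) : (quat w x y z).imK = z := rfl

lemma inv_norm_smul_mem_unitary {p : ℍ} (hp : p ≠ 0) : ‖p‖⁻¹ • p ∈ unitary ℍ := by
  rw [Unitary.mem_iff, Quaternion.star_smul, smul_mul_smul_comm, smul_mul_smul_comm,
    self_mul_star, star_mul_self, normSq_eq_norm_mul_self, ← coe_mul_eq_smul]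
  norm_cast
  field_simp
  simp

lemma exists_mem_unitary_conj_eq {p u v : ℍ} (hp : p ≠ 0) (h : p * u = v * p) :
    ∃ q ∈ unitary ℍ, q * u * star q = v := by
  refine ⟨_, inv_norm_smul_mem_unitary hp, ?_⟩
  rw [Quaternion.star_smul, smul_mul_assoc, smul_mul_assoc, mul_smul_comm, smul_smul, h,
    mul_assoc, self_mul_star, normSq_eq_norm_mul_self, mul_coe_eq_smul, smul_smul]
  field_simp
  simp

lemma exists_mem_unitary_conj_eq_quat {u : ℍ} (hu : u.re = 0) :
    ∃ q ∈ unitary ℍ, ∃ s : ℝ, q * u * star q = quat 0 s 0 0 := by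
  set s := ‖u‖
  have hs : s ^ 2 = u.imI ^ 2 + u.imJ ^ 2 + u.imK ^ 2 := by
    rw [sq, ← normSq_eq_norm_mul_self, normSq_def', hu]; ring
  suffices ∃ p ≠ 0, p * u = quat 0 s 0 0 * p by
    obtain ⟨p, hp, h⟩ := this
    obtain ⟨q, hq, hqu⟩ := exists_mem_unitary_conj_eq hp h
    exact ⟨q, hq, s, hqu⟩
  -- `u * u = -s ^ 2` gives `(s - i u) u = s u + s ^ 2 i = s i (s - i u)`; when `s - i u = 0`,
  -- i.e. `u = -s i`, conjugate by `j` instead.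
  by_cases hp : (s : ℍ) - quat 0 1 0 0 * u = 0
  · have hu' : u = quat 0 (-s) 0 0 := by
      obtain ⟨hI, hK, hJ⟩ : s + u.imI = 0 ∧ u.imK = 0 ∧ u.imJ = 0 := by
        simpa [Quaternion.ext_iff, hu] using hp
      ext <;> simp [hu, hJ, hK]; linarith
    refine ⟨quat 0 0 1 0, fun h => by simpa using congrArg (·.imJ) h, ?_⟩
    rw [hu']; ext <;> simp
  · refine ⟨_, hp, ?_⟩
    ext <;> simp [hu] <;> linarith

lemma exists_mem_unitary_mul_eq_coe (x : ℍ) : ∃ r ∈ unitary ℍ, ∃ t : ℝ, r * x = t := by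
  rcases eq_or_ne x 0 with rfl | hx
  · exact ⟨1, one_mem _, 0, by simp⟩
  · refine ⟨_, inv_norm_smul_mem_unitary (star_ne_zero.2 hx), ‖x‖, ?_⟩
    rw [smul_mul_assoc, star_mul_self, normSq_eq_norm_mul_self, norm_star, ← coe_mul_eq_smul]
    norm_cast
    field_simp [norm_ne_zero_iff.2 hx]

end Quaternion

namespace Unitary

variable {R : Type*} [Monoid R] [StarMul R]

lemma coe_star_mul_self_mul (U : unitary R) (x : R) : star (U : R) * (U * x) = x := by
  rw [← mul_assoc, coe_star_mul_self, one_mul]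

lemma coe_mul_star_self_mul (U : unitary R) (x : R) : (U : R) * (star (U : R) * x) = x := by
  rw [← mul_assoc, mul_star_self_of_mem U.2, one_mul]

end Unitary

namespace Octo

lemma IsAut.symm {φ : Octo ≃ₗ[ℝ] Octo} (hφ : IsAut φ) : IsAut φ.symm := by
  refine ⟨φ.injective ?_, fun x y => φ.injective ?_⟩
  · simp [hφ.1]
  · simp [hφ.2]

lemma IsAut.trans {φ ψ : Octo ≃ₗ[ℝ] Octo} (hφ : IsAut φ) (hψ : IsAut ψ) : IsAut (φ.trans ψ) :=
  ⟨by simp [hφ.1, hψ.1], fun x y => by simp [hφ.2, hψ.2]⟩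

lemma mem_V_iff {x : Octo} : x ∈ V ↔ x.a.re = 0 := by
  simp [V, Octo.ext_iff, Quaternion.ext_iff]

def conjPair (q r : unitary ℍ[ℝ]) : Octo ≃ₗ[ℝ] Octo where
  toFun x := ⟨q * x.a * star (q : ℍ[ℝ]), r * x.b * star (q : ℍ[ℝ])⟩
  invFun x := ⟨star (q : ℍ[ℝ]) * x.a * q, star (r : ℍ[ℝ]) * x.b * q⟩
  map_add' x y := by ext1 <;> simp [mul_add, add_mul]
  map_smul' c x := by ext1 <;> simp
  left_inv x := by
    ext1 <;> simp only [mul_assoc, Unitary.coe_star_mul_self_mul, Unitary.coe_star_mul_self,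
      mul_one]
  right_inv x := by
    ext1 <;> simp only [mul_assoc, Unitary.coe_mul_star_self_mul,
      Unitary.mul_star_self_of_mem q.2, mul_one]

lemma conjPair_apply (q r : unitary ℍ[ℝ]) (x : Octo) :
    conjPair q r x = ⟨q * x.a * star (q : ℍ[ℝ]), r * x.b * star (q : ℍ[ℝ])⟩ := rfl

lemma isAut_conjPair (q r : unitary ℍ[ℝ]) : IsAut (conjPair q r) := by
  refine ⟨by ext1 <;> simp [conjPair_apply], fun x y => ?_⟩
  ext1 <;>
    simp only [conjPair_apply, mul_a, mul_b, star_mul, star_star, mul_assoc,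
      Unitary.coe_star_mul_self_mul] <;>
    noncomm_ring

/-- The automorphism determined by the basic triple `(i, ℓ, j)`, where `ℓ = (0, 1)`: it fixes `1`
and `i`, exchanges `j ↔ ℓ` and `k ↔ iℓ`, and negates `jℓ` and `kℓ`. -/
def swapJL : Octo ≃ₗ[ℝ] Octo :=
  LinearEquiv.ofInvolutive
    { toFun x := ⟨quat x.a.re x.a.imI x.b.re x.b.imI, quat x.a.imJ x.a.imK (-x.b.imJ) (-x.b.imK)⟩
      map_add' x y := by ext <;> simp <;> ring
      map_smul' c x := by ext <;> simp }
    fun x => by ext <;> simp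

lemma swapJL_apply (x : Octo) : swapJL x =
    ⟨quat x.a.re x.a.imI x.b.re x.b.imI, quat x.a.imJ x.a.imK (-x.b.imJ) (-x.b.imK)⟩ := rfl

lemma isAut_swapJL : IsAut swapJL :=
  ⟨by ext <;> simp [swapJL_apply], fun x y => by ext <;> simp [swapJL_apply] <;> ring⟩

def i : Octo := ⟨quat 0 1 0 0, 0⟩

lemma exists_isAut_apply_eq_mk {v : Octo} (hv : v ∈ V) :
    ∃ φ, IsAut φ ∧ ∃ s t : ℝ, φ v = ⟨quat 0 s 0 0, t⟩ := by
  obtain ⟨q, hq, s, hqs⟩ := Quaternion.exists_mem_unitary_conj_eq_quat (mem_V_iff.1 hv)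
  obtain ⟨r, hr, t, hrt⟩ := Quaternion.exists_mem_unitary_mul_eq_coe (v.b * star q)
  refine ⟨_, isAut_conjPair ⟨q, hq⟩ ⟨r, hr⟩, s, t, ?_⟩
  rw [conjPair_apply, mul_assoc r, hrt, hqs]

lemma exists_isAut_apply_eq_smul_i {v : Octo} (hv : v ∈ V) :
    ∃ φ, IsAut φ ∧ ∃ m : ℝ, φ v = m • i := by
  obtain ⟨φ, hφ, s, t, hφv⟩ := exists_isAut_apply_eq_mk hv
  have hswap : swapJL (φ v) = ⟨quat 0 s t 0, 0⟩ := by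
    rw [hφv]; ext <;> simp [swapJL_apply]
  obtain ⟨q, hq, m, hqm⟩ := Quaternion.exists_mem_unitary_conj_eq_quat (u := quat 0 s t 0) rfl
  refine ⟨(φ.trans swapJL).trans (conjPair ⟨q, hq⟩ 1),
    (hφ.trans isAut_swapJL).trans (isAut_conjPair _ _), m, ?_⟩
  simp only [LinearEquiv.trans_apply, hswap, conjPair_apply, hqm]
  ext <;> simp [i]

end Octo

/-- The pure octonions form an irreducible self-similar cone: any nonempty
subset `W ⊆ V` with `W ≠ {0}` that is closed under real scalar multiples and under all
algebra automorphisms of `𝕆` equals `V`. -/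
theorem pure_octonions_irreducible_cone (W : Set Octo) (hWV : W ⊆ Octo.V)
    (hne : W.Nonempty) (hW0 : W ≠ {0})
    (hscal : ∀ (c : ℝ), ∀ w ∈ W, c • w ∈ W)
    (haut : ∀ φ : Octo ≃ₗ[ℝ] Octo, Octo.IsAut φ → ∀ w ∈ W, φ w ∈ W) :
    W = Octo.V := by
  obtain ⟨w, hwW, hw0⟩ : ∃ w ∈ W, w ≠ 0 := by
    by_contra! h
    exact hW0 (Set.eq_singleton_iff_nonempty_unique_mem.2 ⟨hne, h⟩)
  obtain ⟨φ, hφ, m, hm⟩ := Octo.exists_isAut_apply_eq_smul_i (hWV hwW)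
  have hm0 : m ≠ 0 := by
    rintro rfl
    exact hw0 (φ.map_eq_zero_iff.1 (by rw [hm, zero_smul]))
  have hi : Octo.i ∈ W := by
    simpa [hm, smul_smul, inv_mul_cancel₀ hm0] using hscal m⁻¹ _ (haut φ hφ w hwW)
  refine Set.Subset.antisymm hWV fun v hv => ?_
  obtain ⟨ψ, hψ, n, hn⟩ := Octo.exists_isAut_apply_eq_smul_i hv
  simpa [← hn] using haut ψ.symm hψ.symm _ (hscal n _ hi)
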